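/- Let B be an unbounded ballean on a set X with radii set P. If the hyperballean B^♭ is of bounded geometry (there exist α ∈ P and f : P → ℕ such that for every β ∈ P, every H ∈ X^♭, and every α-discrete subset S of B^♭(H,β), one has |S| ≤ f(β)), then there exists a large subset Y ⊆ X such that the subballean B_Y coincides with F_Y, i.e.: for every γ ∈ P there is a finite F ⊆ Y with B(y,γ) ∩ Y = {y} for every y ∈ Y∖F and B(y,γ) ∩ Y ⊆ F for every y ∈ F, and for every finite F ⊆ Y there is γ ∈ P with F ⊆ B(y,γ) for every y ∈ F. -/

import Mathlib

/-- The ball of radius `α` around a subset `A`: `B(A,α) = ⋃_{a ∈ A} B(a,α)`. -/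
def setBall {X P : Type*} (B : X → P → Set X) (A : Set X) (α : P) : Set X :=
  ⋃ a ∈ A, B a α

/-- A subset `Y` is bounded if `Y ⊆ B(x,α)` for some `x` and `α`. -/
def IsBddSet {X P : Type*} (B : X → P → Set X) (Y : Set X) : Prop :=
  ∃ (x : X) (α : P), Y ⊆ B x α

/-- The ball `B^♭(H,α)` of the hyperballean `B^♭`: all nonempty bounded `Z`
with `Z ⊆ B(H,α)` and `H ⊆ B(Z,α)`. -/
def hyperBall {X P : Type*} (B : X → P → Set X) (H : Set X) (α : P) : Set (Set X) :=
  {Z | Z.Nonempty ∧ IsBddSet B Z ∧ Z ⊆ setBall B H α ∧ H ⊆ setBall B Z α}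

/-!
Take a maximal `α`-discrete subset `Y ⊆ X`; it is `α`-large. Bounded geometry of `B^♭`
applied to the singletons `{z}`, `z ∈ B(p,γ) ∩ Y`, shows that every ball meets `Y` in a finite
set. If infinitely many points of `Y` had a `γ`-neighbour in `Y`, local finiteness would give `n`
pairwise disjoint such pairs `{y_i, z_i}`; choosing one point from each pair gives `2ⁿ` subsets
of `Y`, all in `B^♭({y_i}, γ)` and pairwise `α`-far apart in `B^♭` because `Y` is `α`-discrete,
contradicting the bound `f γ` once `2ⁿ > f γ`. So all but finitely many points of `Y` are
`γ`-isolated in `Y`, which is `B_Y = F_Y`.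
-/

open Function

section

variable {X P : Type*} {B : X → P → Set X} {α γ : P} {f : P → ℕ} {Y : Set X}

def IsDiscreteSet (B : X → P → Set X) (α : P) (Y : Set X) : Prop :=
  ∀ y ∈ Y, ∀ y' ∈ Y, y' ∈ B y α → y' = y

def IsHyperDiscrete (B : X → P → Set X) (α : P) (S : Set (Set X)) : Prop :=
  ∀ T ∈ S, hyperBall B T α ∩ S = {T}

def HasBoundedGeometryWith (B : X → P → Set X) (α : P) (f : P → ℕ) : Prop :=
  ∀ (β : P) (H : Set X), H.Nonempty → IsBddSet B H → ∀ S : Set (Set X),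
    S ⊆ hyperBall B H β → IsHyperDiscrete B α S → S.Finite ∧ S.ncard ≤ f β

def nonIsolatedPoints (B : X → P → Set X) (γ : P) (Y : Set X) : Set X :=
  {y ∈ Y | ∃ z ∈ Y, z ∈ B y γ ∧ z ≠ y}

theorem mem_setBall {A : Set X} {x : X} : x ∈ setBall B A α ↔ ∃ a ∈ A, x ∈ B a α := by
  simp [setBall]

@[simp]
theorem setBall_singleton (x : X) (α : P) : setBall B {x} α = B x α := by
  simp [setBall]

theorem self_subset_setBall (hmem : ∀ (x : X) (α : P), x ∈ B x α) (A : Set X) (α : P) :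
    A ⊆ setBall B A α :=
  fun x hx => mem_setBall.2 ⟨x, hx, hmem x α⟩

theorem Set.Finite.exists_subset_ball (hmem : ∀ (x : X) (α : P), x ∈ B x α)
    (hcomp : ∀ α β : P, ∃ γ : P, ∀ x : X, ∀ y ∈ B x α, B y β ⊆ B x γ)
    (hconn : ∀ x y : X, ∃ α : P, y ∈ B x α) (x : X) {s : Set X} (hs : s.Finite) :
    ∃ δ : P, s ⊆ B x δ := by
  induction s, hs using Set.Finite.induction_on with
  | empty => exact (hconn x x).imp fun _ _ => Set.empty_subset _
  | @insert a s _ _ ih =>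
    obtain ⟨δ, hδ⟩ := ih
    obtain ⟨ε, hε⟩ := hconn x a
    -- `B x γ` contains both `B x δ` and `B x ε`, since `x ∈ B x δ`.
    obtain ⟨γ, hγ⟩ := hcomp δ ε
    refine ⟨γ, Set.insert_subset (hγ x x (hmem x δ) hε) fun z hz => ?_⟩
    exact hγ x z (hδ hz) (hmem z ε)

theorem Set.Finite.exists_subset_ball_forall [Nonempty P] (hmem : ∀ (x : X) (α : P), x ∈ B x α)
    (hsymm : ∀ (x y : X) (α : P), y ∈ B x α ↔ x ∈ B y α)
    (hcomp : ∀ α β : P, ∃ γ : P, ∀ x : X, ∀ y ∈ B x α, B y β ⊆ B x γ)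
    (hconn : ∀ x y : X, ∃ α : P, y ∈ B x α) {s : Set X} (hs : s.Finite) :
    ∃ γ : P, ∀ y ∈ s, s ⊆ B y γ := by
  rcases s.eq_empty_or_nonempty with rfl | ⟨x, -⟩
  · exact ⟨Classical.arbitrary P, by simp⟩
  obtain ⟨δ, hδ⟩ := hs.exists_subset_ball hmem hcomp hconn x
  obtain ⟨γ, hγ⟩ := hcomp δ δ
  exact ⟨γ, fun y hy z hz => hγ y x ((hsymm x y δ).1 (hδ hy)) (hδ hz)⟩

theorem Set.Finite.isBddSet (hmem : ∀ (x : X) (α : P), x ∈ B x α)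
    (hcomp : ∀ α β : P, ∃ γ : P, ∀ x : X, ∀ y ∈ B x α, B y β ⊆ B x γ)
    (hconn : ∀ x y : X, ∃ α : P, y ∈ B x α) [Nonempty X] {s : Set X} (hs : s.Finite) :
    IsBddSet B s :=
  let x := Classical.arbitrary X
  ⟨x, hs.exists_subset_ball hmem hcomp hconn x⟩

theorem exists_isDiscreteSet_forall_mem_setBall (hmem : ∀ (x : X) (α : P), x ∈ B x α)
    (hsymm : ∀ (x y : X) (α : P), y ∈ B x α ↔ x ∈ B y α) (α : P) :
    ∃ Y : Set X, IsDiscreteSet B α Y ∧ ∀ x, x ∈ setBall B Y α := by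
  obtain ⟨Y, hY, hmax⟩ := zorn_subset {Y : Set X | IsDiscreteSet B α Y} fun c hc hchain =>
    ⟨⋃₀ c, fun y ⟨s, hs, hy⟩ y' ⟨s', hs', hy'⟩ hyy' => by
      rcases hchain.total hs hs' with h | h
      · exact hc hs' y (h hy) y' hy' hyy'
      · exact hc hs y hy y' (h hy') hyy', fun _ => Set.subset_sUnion_of_mem⟩
  refine ⟨Y, hY, fun x => ?_⟩
  by_contra hx
  have hfar : ∀ y ∈ Y, x ∉ B y α := fun y hy hxy => hx (mem_setBall.2 ⟨y, hy, hxy⟩)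
  have hins : IsDiscreteSet B α (insert x Y) := by
    rintro y (rfl | hy) y' (rfl | hy') hyy'
    · rfl
    · exact absurd ((hsymm _ _ α).1 hyy') (hfar y' hy')
    · exact absurd hyy' (hfar y hy)
    · exact hY y hy y' hy' hyy'
  exact hx (mem_setBall.2 ⟨x, hmax hins (Set.subset_insert x Y) (Set.mem_insert x Y), hmem x α⟩)

theorem IsDiscreteSet.subset_of_subset_setBall {A A' : Set X}
    (hY : IsDiscreteSet B α Y) (hA : A ⊆ Y) (hA' : A' ⊆ Y) (h : A' ⊆ setBall B A α) : A' ⊆ A := by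
  intro x hx
  obtain ⟨a, ha, hxa⟩ := mem_setBall.1 (h hx)
  exact hY a (hA ha) x (hA' hx) hxa ▸ ha

theorem mem_hyperBall_self (hmem : ∀ (x : X) (α : P), x ∈ B x α) {T : Set X} (hne : T.Nonempty)
    (hbdd : IsBddSet B T) (α : P) : T ∈ hyperBall B T α :=
  ⟨hne, hbdd, self_subset_setBall hmem T α, self_subset_setBall hmem T α⟩

theorem singleton_mem_hyperBall_singleton (hmem : ∀ (x : X) (α : P), x ∈ B x α)
    (hsymm : ∀ (x y : X) (α : P), y ∈ B x α ↔ x ∈ B y α) {p z : X} (h : z ∈ B p γ) :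
    {z} ∈ hyperBall B {p} γ :=
  ⟨Set.singleton_nonempty z, ⟨z, γ, by simpa using hmem z γ⟩, by simpa using h,
    by simpa using (hsymm p z γ).1 h⟩

theorem isHyperDiscrete_of_subset_setBall (hmem : ∀ (x : X) (α : P), x ∈ B x α)
    {S : Set (Set X)} (hS : ∀ T ∈ S, T.Nonempty ∧ IsBddSet B T)
    (h : ∀ T ∈ S, ∀ T' ∈ S, T' ⊆ setBall B T α → T' = T) : IsHyperDiscrete B α S := by
  intro T hT
  ext T'
  constructor
  · rintro ⟨hT'T, hT'⟩
    exact h T hT T' hT' hT'T.2.2.1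
  · intro h
    rw [Set.mem_singleton_iff.1 h]
    exact ⟨mem_hyperBall_self hmem (hS T hT).1 (hS T hT).2 α, hT⟩

theorem IsDiscreteSet.finite_ball_inter (hmem : ∀ (x : X) (α : P), x ∈ B x α)
    (hsymm : ∀ (x y : X) (α : P), y ∈ B x α ↔ x ∈ B y α) (hbg : HasBoundedGeometryWith B α f)
    (hY : IsDiscreteSet B α Y) (p : X) (γ : P) : (B p γ ∩ Y).Finite := by
  have hsub : (fun z => ({z} : Set X)) '' (B p γ ∩ Y) ⊆ hyperBall B {p} γ := by
    rintro _ ⟨z, hz, rfl⟩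
    exact singleton_mem_hyperBall_singleton hmem hsymm hz.1
  have hdisc : IsHyperDiscrete B α ((fun z => ({z} : Set X)) '' (B p γ ∩ Y)) := by
    refine isHyperDiscrete_of_subset_setBall hmem (fun T hT => ?_) ?_
    · exact ⟨(hsub hT).1, (hsub hT).2.1⟩
    · rintro _ ⟨z, hz, rfl⟩ _ ⟨z', hz', rfl⟩ h
      rw [hY z hz.2 z' hz'.2 (by simpa using h)]
  exact (hbg γ {p} (Set.singleton_nonempty p) ⟨p, γ, by simpa using hmem p γ⟩ _ hsub hdisc).1
    |>.of_finite_image Set.singleton_injective.injOn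

theorem IsDiscreteSet.two_pow_card_le (hmem : ∀ (x : X) (α : P), x ∈ B x α)
    (hsymm : ∀ (x y : X) (α : P), y ∈ B x α ↔ x ∈ B y α)
    (hcomp : ∀ α β : P, ∃ γ : P, ∀ x : X, ∀ y ∈ B x α, B y β ⊆ B x γ)
    (hconn : ∀ x y : X, ∃ α : P, y ∈ B x α) (hbg : HasBoundedGeometryWith B α f)
    (hY : IsDiscreteSet B α Y) {ι : Type*} [Finite ι] [Nonempty ι] (v : Bool × ι → X)
    (hv : Injective v) (hvY : ∀ p, v p ∈ Y) (hvγ : ∀ i, v (true, i) ∈ B (v (false, i)) γ) :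
    2 ^ Nat.card ι ≤ f γ := by
  have : Nonempty X := ⟨v (false, Classical.arbitrary ι)⟩
  set Z : (ι → Bool) → Set X := fun s => Set.range fun i => v (s i, i)
  have hZY (s) : Z s ⊆ Y := Set.range_subset_iff.2 fun i => hvY _
  have hZ (s) : (Z s).Nonempty ∧ IsBddSet B (Z s) :=
    ⟨Set.range_nonempty _, (Set.finite_range _).isBddSet hmem hcomp hconn⟩
  have hZinj {s s'} (h : Z s' ⊆ Z s) : s' = s := by
    funext i
    obtain ⟨j, hj⟩ := h ⟨i, rfl⟩
    obtain ⟨hs, rfl⟩ := Prod.ext_iff.1 (hv hj)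
    exact hs.symm
  have hclose (b : Bool) (i : ι) : v (b, i) ∈ B (v (false, i)) γ := by
    cases b
    exacts [hmem _ γ, hvγ i]
  have hsub : Set.range Z ⊆ hyperBall B (Z fun _ => false) γ := by
    rintro _ ⟨s, rfl⟩
    refine ⟨(hZ s).1, (hZ s).2, ?_, ?_⟩
    · rintro _ ⟨i, rfl⟩
      exact mem_setBall.2 ⟨_, ⟨i, rfl⟩, hclose (s i) i⟩
    · rintro _ ⟨i, rfl⟩
      exact mem_setBall.2 ⟨_, ⟨i, rfl⟩, (hsymm _ _ γ).1 (hclose (s i) i)⟩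
  have hdisc : IsHyperDiscrete B α (Set.range Z) := by
    refine isHyperDiscrete_of_subset_setBall hmem (fun _ ⟨s, hs⟩ => hs ▸ hZ s) ?_
    rintro _ ⟨s, rfl⟩ _ ⟨s', rfl⟩ h
    rw [hZinj (hY.subset_of_subset_setBall (hZY s) (hZY s') h)]
  have hcard := (hbg γ _ (hZ _).1 (hZ _).2 _ hsub hdisc).2
  rwa [Set.ncard_range_of_injective fun s s' h => hZinj h.le, Nat.card_fun,
    Nat.card_eq_fintype_card, Fintype.card_bool] at hcard

theorem exists_seq_pairwise_disjoint_pairs (hmem : ∀ (x : X) (α : P), x ∈ B x α)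
    (hsymm : ∀ (x y : X) (α : P), y ∈ B x α ↔ x ∈ B y α)
    (htrace : ∀ p, (B p γ ∩ Y).Finite) (hD : (nonIsolatedPoints B γ Y).Infinite) :
    ∃ g : ℕ → X × X,
      (∀ n, (g n).1 ∈ Y ∧ (g n).2 ∈ Y ∧ (g n).2 ∈ B (g n).1 γ ∧ (g n).2 ≠ (g n).1) ∧
      Pairwise fun m n => Disjoint ({(g m).1, (g m).2} : Set X) {(g n).1, (g n).2} := by
  let Apart : X × X → X × X → Prop := fun p q => Disjoint ({p.1, p.2} : Set X) {q.1, q.2}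
  have : Std.Symm Apart := ⟨fun _ _ h => h.symm⟩
  refine exists_seq_of_forall_finset_exists'
    (fun q : X × X => q.1 ∈ Y ∧ q.2 ∈ Y ∧ q.2 ∈ B q.1 γ ∧ q.2 ≠ q.1) Apart fun s _ => ?_
  have hN : (⋃ p ∈ (s : Set (X × X)), (B p.1 γ ∪ B p.2 γ) ∩ Y).Finite :=
    s.finite_toSet.biUnion fun p _ => by
      rw [Set.union_inter_distrib_right]
      exact (htrace _).union (htrace _)
  obtain ⟨y, ⟨hyY, z, hzY, hzy, hne⟩, hyN⟩ := (hD.sdiff hN).nonempty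
  refine ⟨(y, z), ⟨hyY, hzY, hzy, hne⟩, fun p hp => Set.disjoint_left.2 fun w hw hw' => ?_⟩
  have hyw : y ∈ B w γ := by
    rcases hw' with rfl | rfl
    exacts [hmem w γ, (hsymm _ _ γ).1 hzy]
  refine hyN (Set.mem_biUnion (Finset.mem_coe.2 hp) ⟨?_, hyY⟩)
  rcases hw with rfl | rfl
  exacts [Or.inl hyw, Or.inr hyw]

theorem IsDiscreteSet.finite_nonIsolatedPoints (hmem : ∀ (x : X) (α : P), x ∈ B x α)
    (hsymm : ∀ (x y : X) (α : P), y ∈ B x α ↔ x ∈ B y α)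
    (hcomp : ∀ α β : P, ∃ γ : P, ∀ x : X, ∀ y ∈ B x α, B y β ⊆ B x γ)
    (hconn : ∀ x y : X, ∃ α : P, y ∈ B x α) (hbg : HasBoundedGeometryWith B α f)
    (hY : IsDiscreteSet B α Y) (γ : P) : (nonIsolatedPoints B γ Y).Finite := by
  by_contra hD
  obtain ⟨g, hgY, hg⟩ :=
    exists_seq_pairwise_disjoint_pairs hmem hsymm (hY.finite_ball_inter hmem hsymm hbg · γ) hD
  let v : Bool × Fin (f γ + 1) → X := fun p => if p.1 then (g p.2).2 else (g p.2).1
  have hv_mem : ∀ p, v p ∈ ({(g p.2).1, (g p.2).2} : Set X) := by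
    rintro ⟨_ | _, i⟩ <;> simp [v]
  have hv : Injective v := by
    rintro ⟨b, m⟩ ⟨b', n⟩ h
    obtain rfl : m = n := by
      by_contra hmn
      exact Set.disjoint_left.1 (hg (Fin.val_injective.ne hmn)) (hv_mem (b, m))
        (h ▸ hv_mem (b', n))
    have hne := (hgY m).2.2.2
    revert h
    cases b <;> cases b' <;> simp [v, hne, hne.symm]
  have hcard := hY.two_pow_card_le hmem hsymm hcomp hconn hbg v hv
    (by rintro ⟨_ | _, i⟩ <;> simp [v, hgY]) fun i => (hgY i).2.2.1
  rw [Nat.card_fin] at hcard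
  have := Nat.lt_two_pow_self (n := f γ + 1)
  omega

theorem ball_inter_eq_singleton_of_notMem_nonIsolatedPoints
    (hmem : ∀ (x : X) (α : P), x ∈ B x α) {y : X} (hy : y ∈ Y)
    (hy' : y ∉ nonIsolatedPoints B γ Y) : B y γ ∩ Y = {y} := by
  refine Set.Subset.antisymm (fun z hz => ?_) (Set.singleton_subset_iff.2 ⟨hmem y γ, hy⟩)
  by_contra hzy
  exact hy' ⟨hy, z, hz.2, hz.1, hzy⟩

theorem ball_inter_subset_nonIsolatedPoints
    (hsymm : ∀ (x y : X) (α : P), y ∈ B x α ↔ x ∈ B y α) {y : X}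
    (hy : y ∈ nonIsolatedPoints B γ Y) : B y γ ∩ Y ⊆ nonIsolatedPoints B γ Y := by
  rintro z ⟨hz, hzY⟩
  by_cases hzy : z = y
  · exact hzy ▸ hy
  · exact ⟨hzY, y, hy.1, (hsymm y z γ).1 hz, Ne.symm hzy⟩

end

theorem hyperballean_bounded_geometry_implies_sub_FY_general
    {X P : Type*} (B : X → P → Set X)
    (hmem : ∀ (x : X) (α : P), x ∈ B x α)
    (hsymm : ∀ (x y : X) (α : P), y ∈ B x α ↔ x ∈ B y α)
    (hcomp : ∀ α β : P, ∃ γ : P, ∀ x : X, ∀ y ∈ B x α, B y β ⊆ B x γ)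
    (hconn : ∀ x y : X, ∃ α : P, y ∈ B x α)
    (hbg : ∃ (α : P) (f : P → ℕ), ∀ (β : P) (H : Set X), H.Nonempty → IsBddSet B H →
      ∀ S : Set (Set X), S ⊆ hyperBall B H β →
        (∀ T ∈ S, hyperBall B T α ∩ S = {T}) →
        S.Finite ∧ S.ncard ≤ f β) :
    ∃ Y : Set X,
      (∃ β : P, ∀ x : X, x ∈ setBall B Y β) ∧
      (∀ γ : P, ∃ F : Finset X, (F : Set X) ⊆ Y ∧
        (∀ y ∈ Y, y ∉ F → B y γ ∩ Y = {y}) ∧ (∀ y ∈ F, B y γ ∩ Y ⊆ (F : Set X))) ∧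
      (∀ F : Finset X, (F : Set X) ⊆ Y → ∃ γ : P, ∀ y ∈ F, (F : Set X) ⊆ B y γ) := by
  obtain ⟨α, f, hbg⟩ := hbg
  have : Nonempty P := ⟨α⟩
  obtain ⟨Y, hY, hlarge⟩ := exists_isDiscreteSet_forall_mem_setBall hmem hsymm α
  refine ⟨Y, ⟨α, hlarge⟩, fun γ => ?_,
    fun F _ => F.finite_toSet.exists_subset_ball_forall hmem hsymm hcomp hconn⟩
  have hD := hY.finite_nonIsolatedPoints hmem hsymm hcomp hconn hbg γ
  refine ⟨hD.toFinset, by rw [hD.coe_toFinset]; exact Set.sep_subset _ _,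
    fun y hy hyD => ?_, fun y hyD => ?_⟩
  · exact ball_inter_eq_singleton_of_notMem_nonIsolatedPoints hmem hy (by simpa using hyD)
  · simpa using ball_inter_subset_nonIsolatedPoints hsymm (by simpa using hyD)

/-- Theorem 1(ii), necessity: if `B` is an unbounded ballean on `X` whose
hyperballean `B^♭` is of bounded geometry, then there exists a large subset
`Y ⊆ X` such that `B_Y = F_Y`. -/
theorem hyperballean_bounded_geometry_implies_sub_FY
    {X P : Type*} [Nonempty P] (B : X → P → Set X)
    (hmem : ∀ (x : X) (α : P), x ∈ B x α)
    (hsymm : ∀ (x y : X) (α : P), y ∈ B x α ↔ x ∈ B y α)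
    (hcomp : ∀ α β : P, ∃ γ : P, ∀ x : X, ∀ y ∈ B x α, B y β ⊆ B x γ)
    (hconn : ∀ x y : X, ∃ α : P, y ∈ B x α)
    (hunb : ¬ IsBddSet B Set.univ)
    (hbg : ∃ (α : P) (f : P → ℕ), ∀ (β : P) (H : Set X), H.Nonempty → IsBddSet B H →
      ∀ S : Set (Set X), S ⊆ hyperBall B H β →
        (∀ T ∈ S, hyperBall B T α ∩ S = {T}) →
        S.Finite ∧ S.ncard ≤ f β) :
    ∃ Y : Set X,
      (∃ β : P, ∀ x : X, x ∈ setBall B Y β) ∧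
      (∀ γ : P, ∃ F : Finset X, (F : Set X) ⊆ Y ∧
        (∀ y ∈ Y, y ∉ F → B y γ ∩ Y = {y}) ∧ (∀ y ∈ F, B y γ ∩ Y ⊆ (F : Set X))) ∧
      (∀ F : Finset X, (F : Set X) ⊆ Y → ∃ γ : P, ∀ y ∈ F, (F : Set X) ⊆ B y γ) :=
  hyperballean_bounded_geometry_implies_sub_FY_general B hmem hsymm hcomp hconn hbg
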